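/- Let E, F ⊆ ℝ^d be dust-like self-similar sets with contraction vectors ρ = (ρ₁, …, ρ_m) and τ = (τ₁, …, τ_n) respectively, let f : E → F be a bi-Lipschitz bijection, and let s be their common Hausdorff dimension. For k ≥ 1 define g_k : E → ℝ by g_k(x) = H^s(f(E_i)) / H^s(E_i), where i is the unique word of length k over {1, …, m} with x ∈ E_i. Then the set { g_{k+1}(x) / g_k(x) : x ∈ E, k ≥ 1 } is finite. -/

import Mathlib

open Set Metric MeasureTheory

noncomputable section

/-- Two subsets of a metric space are Lipschitz equivalent if there is a
bi-Lipschitz bijection between them. -/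
def LipschitzEquivalent {X : Type*} [MetricSpace X] (E F : Set X) : Prop :=
  ∃ (f : X → X) (C : ℝ), 0 < C ∧ Set.BijOn f E F ∧
    ∀ x ∈ E, ∀ y ∈ E,
      C⁻¹ * dist x y ≤ dist (f x) (f y) ∧ dist (f x) (f y) ≤ C * dist x y

/-- `φ` is a similarity with ratio `r`. -/
def IsSimilarity {X : Type*} [MetricSpace X] (r : ℝ) (φ : X → X) : Prop :=
  ∀ x y, dist (φ x) (φ y) = r * dist x y

/-- `ρ = (ρ₁, …, ρ_m)` is a contraction vector for `ℝ^d`. -/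
def IsContractionVector (d m : ℕ) (ρ : Fin m → ℝ) : Prop :=
  (∀ j, ρ j ∈ Set.Ioo (0:ℝ) 1) ∧ ∑ j, ρ j ^ d < 1

/-- `E` is a dust-like self-similar set with contraction vector `ρ`,
i.e. `E ∈ D(ρ)`. -/
def IsDustLike {X : Type*} [MetricSpace X] {m : ℕ} (ρ : Fin m → ℝ) (E : Set X) : Prop :=
  E.Nonempty ∧ IsCompact E ∧
  ∃ φ : Fin m → X → X,
    (∀ j, IsSimilarity (ρ j) (φ j)) ∧
    E = ⋃ j, φ j '' E ∧
    Pairwise fun j k => Disjoint (φ j '' E) (φ k '' E)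
/-- For a finite word `w = i₁⋯i_k`, the composed map `φ_w = φ_{i₁} ∘ ⋯ ∘ φ_{i_k}`
(the identity for the empty word). `wordMap φ w '' E` is the cylinder `E_w`. -/
def wordMap {X : Type*} {m : ℕ} (φ : Fin m → X → X) (w : List (Fin m)) : X → X :=
  w.foldr (fun i g => φ i ∘ g) id

/-!
The image `f(E_i)` of a cylinder is a subset of `F` of diameter `≍ ρ_i` that is separated from
the rest of `F` by a gap `≍ ρ_i`. If `F_w` is the smallest cylinder of `F` containing it, then
`τ_w ≍ ρ_i`, and `ψ_w⁻¹(f(E_i))` is a subset `B` of `F` separated from `F \ B` by a uniform gap;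
there are only finitely many such subsets of `F`. The smallest cylinder containing `f(E_{ij})`
is `F_{wu}` with `τ_u ≳ ρ_j`, so `u` ranges over a finite set of words, and by self-similarity
of `H^s` the ratio `g_{k+1}/g_k` on `E_{ij}` is `τ_u^s H^s(B') / (ρ_j^s H^s(B))`.
-/

open Filter Topology
open scoped ENNReal NNReal

section Similarity

variable {X : Type*} [MetricSpace X] {r r' : ℝ} {g h : X → X}

theorem IsSimilarity.comp (hg : IsSimilarity r g) (hh : IsSimilarity r' h) :
    IsSimilarity (r * r') (g ∘ h) := fun x y => by
  rw [Function.comp_apply, Function.comp_apply, hg, hh, mul_assoc]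

theorem IsSimilarity.lipschitzWith (hg : IsSimilarity r g) (hr : 0 ≤ r) :
    LipschitzWith r.toNNReal g :=
  LipschitzWith.of_dist_le_mul fun x y => by rw [hg, Real.coe_toNNReal _ hr]

theorem IsSimilarity.antilipschitzWith (hg : IsSimilarity r g) (hr : 0 < r) :
    AntilipschitzWith r⁻¹.toNNReal g :=
  AntilipschitzWith.of_le_mul_dist fun x y => by
    rw [hg, Real.coe_toNNReal _ (inv_nonneg.2 hr.le), inv_mul_cancel_left₀ hr.ne']

theorem IsSimilarity.hausdorffMeasure_image [MeasurableSpace X] [BorelSpace X]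
    (hg : IsSimilarity r g) (hr : 0 < r) {s : ℝ} (hs : 0 ≤ s) (A : Set X) :
    μH[s] (g '' A) = ENNReal.ofReal r ^ s * μH[s] A := by
  refine le_antisymm ((hg.lipschitzWith hr.le).hausdorffMeasure_image_le hs A) ?_
  calc ENNReal.ofReal r ^ s * μH[s] A
      ≤ ENNReal.ofReal r ^ s * (ENNReal.ofReal r⁻¹ ^ s * μH[s] (g '' A)) :=
        mul_le_mul_right ((hg.antilipschitzWith hr).le_hausdorffMeasure_image hs A) _
    _ = μH[s] (g '' A) := by
        rw [← mul_assoc, ← ENNReal.mul_rpow_of_nonneg _ _ hs, ← ENNReal.ofReal_mul hr.le,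
          mul_inv_cancel₀ hr.ne', ENNReal.ofReal_one, ENNReal.one_rpow, one_mul]

end Similarity

section Separated

variable {X : Type*} [MetricSpace X]

def IsSeparatedSubset (F : Set X) (c : ℝ) (B : Set X) : Prop :=
  B ⊆ F ∧ ∀ x ∈ B, ∀ y ∈ F \ B, c ≤ dist x y

variable {F B : Set X} {c c' : ℝ}

theorem IsSeparatedSubset.mono (hB : IsSeparatedSubset F c B) (hc : c' ≤ c) :
    IsSeparatedSubset F c' B :=
  ⟨hB.1, fun x hx y hy => hc.trans (hB.2 x hx y hy)⟩

theorem IsSeparatedSubset.inter_preimage {r : ℝ} {g : X → X} (hB : IsSeparatedSubset F c B)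
    (hg : IsSimilarity r g) (hr : 0 < r) (hgF : MapsTo g F F) :
    IsSeparatedSubset F (c / r) (F ∩ g ⁻¹' B) := by
  refine ⟨inter_subset_left, fun x hx y hy => ?_⟩
  rw [div_le_iff₀' hr, ← hg]
  exact hB.2 _ hx.2 _ ⟨hgF hy.1, fun h => hy.2 ⟨hy.1, h⟩⟩

theorem IsSeparatedSubset.image {E : Set X} {f : X → X} {K : ℝ} (hB : IsSeparatedSubset E c B)
    (hK : 0 ≤ K) (hmaps : MapsTo f E F) (hsurj : SurjOn f E F)
    (hf : ∀ x ∈ E, ∀ y ∈ E, K * dist x y ≤ dist (f x) (f y)) :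
    IsSeparatedSubset F (K * c) (f '' B) := by
  refine ⟨(image_mono hB.1).trans hmaps.image_subset, ?_⟩
  rintro - ⟨x, hx, rfl⟩ y ⟨hyF, hyB⟩
  obtain ⟨e, he, rfl⟩ := hsurj hyF
  calc K * c ≤ K * dist x e :=
        mul_le_mul_of_nonneg_left (hB.2 x hx e ⟨he, fun h => hyB (mem_image_of_mem f h)⟩) hK
    _ ≤ dist (f x) (f e) := hf x (hB.1 hx) e he

end Separated

section ProdMap

variable {α : Type*} {ρ : α → ℝ}

theorem List.prod_map_pos (hρ : ∀ a, 0 < ρ a) (w : List α) : 0 < (w.map ρ).prod :=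
  List.prod_pos fun _ hx => by
    obtain ⟨a, -, rfl⟩ := List.mem_map.1 hx
    exact hρ a

theorem List.prod_map_le_pow (hρ : ∀ a, 0 < ρ a) {q : ℝ} (hq : 0 ≤ q) (hρq : ∀ a, ρ a ≤ q) :
    ∀ w : List α, (w.map ρ).prod ≤ q ^ w.length
  | [] => by simp
  | a :: w => by
    rw [List.map_cons, List.prod_cons, List.length_cons, pow_succ']
    exact mul_le_mul (hρq a) (List.prod_map_le_pow hρ hq hρq w) (List.prod_map_pos hρ w).le hq

theorem exists_forall_prod_map_lt [Finite α] (hρ : ∀ a, ρ a ∈ Ioo (0 : ℝ) 1) {c : ℝ}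
    (hc : 0 < c) :
    ∃ L, ∀ w : List α, L ≤ w.length → (w.map ρ).prod < c := by
  obtain ⟨q, hq0, hq1, hρq⟩ : ∃ q, 0 ≤ q ∧ q < 1 ∧ ∀ a, ρ a ≤ q := by
    rcases isEmpty_or_nonempty α with hα | hα
    · exact ⟨0, le_rfl, one_pos, isEmptyElim⟩
    · obtain ⟨a, ha⟩ := Finite.exists_max ρ
      exact ⟨ρ a, (hρ a).1.le, (hρ a).2, ha⟩
  obtain ⟨L, hL⟩ := exists_pow_lt_of_lt_one hc hq1
  refine ⟨L, fun w hw => lt_of_le_of_lt ?_ hL⟩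
  calc (w.map ρ).prod ≤ q ^ w.length := List.prod_map_le_pow (fun a => (hρ a).1) hq0 hρq w
    _ ≤ q ^ L := pow_le_pow_of_le_one hq0 hq1.le hw

theorem finite_setOf_le_prod_map [Finite α] (hρ : ∀ a, ρ a ∈ Ioo (0 : ℝ) 1) {c : ℝ}
    (hc : 0 < c) :
    {w : List α | c ≤ (w.map ρ).prod}.Finite := by
  obtain ⟨L, hL⟩ := exists_forall_prod_map_lt hρ hc
  exact (List.finite_length_lt α L).subset fun w hw =>
    not_le.1 fun h => (hL w h).not_ge hw

end ProdMap

section WordMap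

variable {X : Type*} {m : ℕ} {φ : Fin m → X → X} {E : Set X}

theorem wordMap_append (u v : List (Fin m)) :
    wordMap φ (u ++ v) = wordMap φ u ∘ wordMap φ v := by
  induction u with
  | nil => rfl
  | cons a u ih => exact congrArg (φ a ∘ ·) ih

theorem mapsTo_wordMap (hE : E = ⋃ j, φ j '' E) : ∀ w : List (Fin m), MapsTo (wordMap φ w) E E
  | [] => mapsTo_id E
  | a :: w => MapsTo.comp (fun _ hx => hE ▸ mem_iUnion.2 ⟨a, mem_image_of_mem _ hx⟩)
      (mapsTo_wordMap hE w)

theorem wordMap_append_image_subset (hE : E = ⋃ j, φ j '' E) (u v : List (Fin m)) :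
    wordMap φ (u ++ v) '' E ⊆ wordMap φ u '' E := by
  rw [wordMap_append, image_comp]
  exact image_mono (mapsTo_wordMap hE v).image_subset

theorem exists_length_eq_mem_wordMap_image (hE : E = ⋃ j, φ j '' E) (L : ℕ) :
    ∀ x ∈ E, ∃ w : List (Fin m), w.length = L ∧ x ∈ wordMap φ w '' E := by
  induction L with
  | zero => exact fun x hx => ⟨[], rfl, x, hx, rfl⟩
  | succ L ih =>
    intro x hx
    obtain ⟨j, y, hy, rfl⟩ := mem_iUnion.1 (hE ▸ hx)
    obtain ⟨w, hw, z, hz, rfl⟩ := ih y hy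
    exact ⟨j :: w, by rw [List.length_cons, hw], z, hz, rfl⟩

end WordMap

structure IsDustLikeWith {X : Type*} [MetricSpace X] {m : ℕ} (ρ : Fin m → ℝ)
    (φ : Fin m → X → X) (E : Set X) : Prop where
  ratio_mem : ∀ j, ρ j ∈ Ioo (0 : ℝ) 1
  isSimilarity : ∀ j, IsSimilarity (ρ j) (φ j)
  isCompact : IsCompact E
  eq_iUnion : E = ⋃ j, φ j '' E
  pairwise_disjoint : Pairwise fun j k => Disjoint (φ j '' E) (φ k '' E)

section Words

variable {X : Type*} [MetricSpace X] {m : ℕ} {ρ : Fin m → ℝ} {φ : Fin m → X → X} {E : Set X}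

theorem isSimilarity_wordMap (hφ : ∀ j, IsSimilarity (ρ j) (φ j)) :
    ∀ w : List (Fin m), IsSimilarity (w.map ρ).prod (wordMap φ w)
  | [] => fun x y => by simp [wordMap]
  | a :: w => by
    rw [List.map_cons, List.prod_cons]
    exact (hφ a).comp (isSimilarity_wordMap hφ w)

theorem hausdorffMeasure_wordMap_image [MeasurableSpace X] [BorelSpace X] (hρ : ∀ j, 0 < ρ j)
    (hφ : ∀ j, IsSimilarity (ρ j) (φ j)) {s : ℝ} (hs : 0 ≤ s) (w : List (Fin m)) (A : Set X) :
    μH[s] (wordMap φ w '' A) = ENNReal.ofReal (w.map ρ).prod ^ s * μH[s] A :=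
  (isSimilarity_wordMap hφ w).hausdorffMeasure_image (List.prod_map_pos hρ w) hs A

theorem dist_le_of_mem_wordMap_image (hρ : ∀ j, 0 < ρ j) (hφ : ∀ j, IsSimilarity (ρ j) (φ j))
    (hE : Bornology.IsBounded E) {w : List (Fin m)} {x y : X} (hx : x ∈ wordMap φ w '' E)
    (hy : y ∈ wordMap φ w '' E) : dist x y ≤ (w.map ρ).prod * diam E := by
  obtain ⟨a, ha, rfl⟩ := hx
  obtain ⟨b, hb, rfl⟩ := hy
  rw [isSimilarity_wordMap hφ w a b]
  exact mul_le_mul_of_nonneg_left (dist_le_diam_of_mem hE ha hb) (List.prod_map_pos hρ w).le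

theorem IsDustLikeWith.exists_isSeparatedSubset (hE : IsDustLikeWith ρ φ E) :
    ∃ g > 0, ∀ j, IsSeparatedSubset E g (φ j '' E) := by
  have hcompact k : IsCompact (φ k '' E) :=
    hE.isCompact.image ((hE.isSimilarity k).lipschitzWith (hE.ratio_mem k).1.le).continuous
  have hsep j : ∀ᶠ g in 𝓝[>] (0 : ℝ), IsSeparatedSubset E g (φ j '' E) := by
    obtain ⟨r, hr, hrdist⟩ := Metric.exists_pos_forall_lt_edist (hcompact j)
      ((toFinite {k | k ≠ j}).isCompact_biUnion fun k _ => hcompact k).isClosed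
      (disjoint_iUnion₂_right.2 fun k hk => hE.pairwise_disjoint (Ne.symm hk))
    filter_upwards [Ioc_mem_nhdsGT hr] with g hg
    refine ⟨fun x hx => hE.eq_iUnion ▸ mem_iUnion.2 ⟨j, hx⟩, fun x hx y hy => ?_⟩
    obtain ⟨k, hk⟩ := mem_iUnion.1 (hE.eq_iUnion ▸ hy.1)
    have hkj : k ≠ j := by
      rintro rfl
      exact hy.2 hk
    have hxy := hrdist x hx y (mem_biUnion hkj hk)
    rw [edist_nndist, ENNReal.coe_lt_coe, ← NNReal.coe_lt_coe, coe_nndist] at hxy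
    exact hg.2.trans hxy.le
  -- each `hsep j` holds on an interval `(0, r_j]`
  obtain ⟨g, hg, hg0⟩ := ((eventually_all.2 hsep).and self_mem_nhdsWithin).exists
  exact ⟨g, hg0, hg⟩

theorem isSeparatedSubset_wordMap_image (hρ : ∀ j, ρ j ∈ Ioo (0 : ℝ) 1)
    (hφ : ∀ j, IsSimilarity (ρ j) (φ j)) (hE : E = ⋃ j, φ j '' E) {g : ℝ} (hg0 : 0 ≤ g)
    (hg : ∀ j, IsSeparatedSubset E g (φ j '' E)) :
    ∀ w : List (Fin m), IsSeparatedSubset E (g * (w.map ρ).prod) (wordMap φ w '' E)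
  | [] => ⟨(mapsTo_wordMap hE []).image_subset,
      fun _ _ y hy => absurd hy.1 (by simpa [wordMap] using hy.2)⟩
  | a :: w => by
    refine ⟨(mapsTo_wordMap hE _).image_subset, ?_⟩
    rintro - ⟨x, hx, rfl⟩ y ⟨hyE, hyw⟩
    by_cases hya : y ∈ φ a '' E
    · obtain ⟨y, hy, rfl⟩ := hya
      have hyw' : y ∉ wordMap φ w '' E := fun ⟨z, hz, hzy⟩ => hyw ⟨z, hz, congrArg (φ a) hzy⟩
      have := (isSeparatedSubset_wordMap_image hρ hφ hE hg0 hg w).2 _ ⟨x, hx, rfl⟩ y ⟨hy, hyw'⟩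
      calc g * ((a :: w).map ρ).prod = ρ a * (g * (w.map ρ).prod) := by
            rw [List.map_cons, List.prod_cons]
            ring
        _ ≤ ρ a * dist (wordMap φ w x) y := mul_le_mul_of_nonneg_left this (hρ a).1.le
        _ = dist (wordMap φ (a :: w) x) (φ a y) := ((hφ a) _ _).symm
    · calc g * ((a :: w).map ρ).prod ≤ g * 1 := by
            refine mul_le_mul_of_nonneg_left ?_ hg0
            simpa using List.prod_map_le_pow (fun j => (hρ j).1) zero_le_one (fun j => (hρ j).2.le)
              (a :: w)
        _ ≤ dist (wordMap φ (a :: w) x) y := by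
            rw [mul_one]
            exact (hg a).2 _ (mem_image_of_mem _ (mapsTo_wordMap hE w hx)) y ⟨hyE, hya⟩

theorem isPrefix_of_mem_wordMap_image (hρ : ∀ j, 0 < ρ j) (hφ : ∀ j, IsSimilarity (ρ j) (φ j))
    (hE : E = ⋃ j, φ j '' E) (hdisj : Pairwise fun j k => Disjoint (φ j '' E) (φ k '' E)) :
    ∀ {w v : List (Fin m)} {x : X}, x ∈ wordMap φ w '' E → x ∈ wordMap φ v '' E →
      w.length ≤ v.length → w <+: v
  | [], _, _, _, _, _ => List.nil_prefix
  | _ :: _, [], _, _, _, hlen => absurd hlen (by simp)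
  | a :: w, b :: v, _, ⟨y, hy, rfl⟩, ⟨z, hz, hyz⟩, hlen => by
    obtain rfl : b = a := hdisj.eq <| not_disjoint_iff.2
      ⟨_, ⟨_, mapsTo_wordMap hE v hz, hyz⟩, mem_image_of_mem _ (mapsTo_wordMap hE w hy)⟩
    have hyz' := ((hφ b).antilipschitzWith (hρ b)).injective hyz
    exact List.cons_prefix_cons.2 ⟨rfl, isPrefix_of_mem_wordMap_image hρ hφ hE hdisj
      ⟨y, hy, rfl⟩ ⟨z, hz, hyz'⟩ (by simpa using hlen)⟩

theorem finite_setOf_isSeparatedSubset (hρ : ∀ j, ρ j ∈ Ioo (0 : ℝ) 1)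
    (hφ : ∀ j, IsSimilarity (ρ j) (φ j)) (hE : E = ⋃ j, φ j '' E) (hbdd : Bornology.IsBounded E)
    {c : ℝ} (hc : 0 < c) : {B | IsSeparatedSubset E c B}.Finite := by
  obtain ⟨L, hL⟩ := exists_forall_prod_map_lt hρ (div_pos hc (by positivity : 0 < diam E + 1))
  have hsmall : ∀ w : List (Fin m), w.length = L →
      ∀ x ∈ wordMap φ w '' E, ∀ y ∈ wordMap φ w '' E, dist x y < c := by
    intro w hw x hx y hy
    have hprod := (lt_div_iff₀ (by positivity)).1 (hL w hw.ge)
    calc dist x y ≤ (w.map ρ).prod * diam E :=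
          dist_le_of_mem_wordMap_image (fun j => (hρ j).1) hφ hbdd hx hy
      _ < c := by nlinarith [List.prod_map_pos (fun j => (hρ j).1) w]
  -- a separated `B` is the union of the level-`L` cylinders it meets
  refine ((List.finite_length_eq (Fin m) L).finite_subsets.image
    fun V => ⋃ w ∈ V, wordMap φ w '' E).subset fun B hB => ?_
  refine ⟨{w | w.length = L ∧ (wordMap φ w '' E ∩ B).Nonempty}, fun w hw => hw.1, ?_⟩
  ext x
  simp only [mem_iUnion, exists_prop]
  constructor
  · rintro ⟨w, ⟨hwL, y, hyw, hyB⟩, hxw⟩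
    by_contra hxB
    exact (hB.2 y hyB x ⟨(mapsTo_wordMap hE w).image_subset hxw, hxB⟩).not_gt
      (hsmall w hwL y hyw x hxw)
  · intro hx
    obtain ⟨w, hwL, hxw⟩ := exists_length_eq_mem_wordMap_image hE L x (hB.1 hx)
    exact ⟨w, ⟨hwL, x, hxw, hx⟩, hxw⟩

end Words

section LongestCoveringWord

variable {X : Type*} [MetricSpace X] {m : ℕ} {ρ : Fin m → ℝ} {φ : Fin m → X → X}
  {E D D' : Set X} {w w' : List (Fin m)}

def IsLongestCoveringWord (φ : Fin m → X → X) (E D : Set X) (w : List (Fin m)) : Prop :=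
  D ⊆ wordMap φ w '' E ∧ ∀ v : List (Fin m), D ⊆ wordMap φ v '' E → v.length ≤ w.length

theorem exists_isLongestCoveringWord (hρ : ∀ j, ρ j ∈ Ioo (0 : ℝ) 1)
    (hφ : ∀ j, IsSimilarity (ρ j) (φ j)) (hE : Bornology.IsBounded E) (hDE : D ⊆ E) {x y : X}
    (hx : x ∈ D) (hy : y ∈ D) (hxy : x ≠ y) : ∃ w, IsLongestCoveringWord φ E D w := by
  have hdist : 0 < dist x y := dist_pos.2 hxy
  have hdiam : 0 < diam E := hdist.trans_le (dist_le_diam_of_mem hE (hDE hx) (hDE hy))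
  have hfin : {w : List (Fin m) | D ⊆ wordMap φ w '' E}.Finite :=
    (finite_setOf_le_prod_map hρ (div_pos hdist hdiam)).subset fun w hw =>
      (div_le_iff₀ hdiam).2
        (dist_le_of_mem_wordMap_image (fun j => (hρ j).1) hφ hE (hw hx) (hw hy))
  obtain ⟨w, hw, hmax⟩ := exists_max_image _ List.length hfin ⟨[], by simpa [wordMap] using hDE⟩
  exact ⟨w, hw, hmax⟩

theorem IsLongestCoveringWord.mul_prod_map_le (hw : IsLongestCoveringWord φ E D w)
    (hρ : ∀ j, 0 < ρ j) (hφ : ∀ j, IsSimilarity (ρ j) (φ j)) (hE : E = ⋃ j, φ j '' E) {g δ : ℝ}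
    (hg : ∀ j, IsSeparatedSubset E g (φ j '' E)) (hD : D.Nonempty)
    (hδ : ∀ a ∈ D, ∀ b ∈ D, dist a b ≤ δ) : g * (w.map ρ).prod ≤ δ := by
  obtain ⟨x, hx⟩ := hD
  obtain ⟨c, hc, rfl⟩ := hw.1 hx
  obtain ⟨j, hcj⟩ := mem_iUnion.1 (hE ▸ hc)
  -- by maximality `D ⊄ E_{wj}`, so `D` also meets another child of `E_w`
  obtain ⟨y, hy, hyj⟩ := not_subset.1 fun h => by simpa using hw.2 (w ++ [j]) h
  obtain ⟨c', hc', rfl⟩ := hw.1 hy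
  have hc'j : c' ∉ φ j '' E := fun h => hyj <| by
    rw [wordMap_append, image_comp]
    exact mem_image_of_mem _ h
  refine le_trans ?_ (hδ _ hx _ hy)
  rw [isSimilarity_wordMap hφ w, mul_comm]
  exact mul_le_mul_of_nonneg_left ((hg j).2 c hcj c' ⟨hc', hc'j⟩) (List.prod_map_pos hρ w).le

theorem IsLongestCoveringWord.isPrefix (hw : IsLongestCoveringWord φ E D w)
    (hw' : IsLongestCoveringWord φ E D' w') (hρ : ∀ j, 0 < ρ j)
    (hφ : ∀ j, IsSimilarity (ρ j) (φ j)) (hE : E = ⋃ j, φ j '' E)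
    (hdisj : Pairwise fun j k => Disjoint (φ j '' E) (φ k '' E)) (hD' : D' ⊆ D)
    (hne : D'.Nonempty) : w <+: w' := by
  obtain ⟨x, hx⟩ := hne
  exact isPrefix_of_mem_wordMap_image hρ hφ hE hdisj (hw.1 (hD' hx)) (hw'.1 hx)
    (hw'.2 w (hD'.trans hw.1))

end LongestCoveringWord

section BiLipschitz

variable {X : Type*} [MetricSpace X] {m n : ℕ} {ρ : Fin m → ℝ} {τ : Fin n → ℝ}
  {φ : Fin m → X → X} {ψ : Fin n → X → X} {E F : Set X} {f : X → X} {C : ℝ}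

theorem dist_le_of_mem_image_wordMap_image (hρ : ∀ j, 0 < ρ j)
    (hφ : ∀ j, IsSimilarity (ρ j) (φ j)) (hE : E = ⋃ j, φ j '' E) (hbdd : Bornology.IsBounded E)
    (hC : 0 ≤ C) (hf : ∀ x ∈ E, ∀ y ∈ E, dist (f x) (f y) ≤ C * dist x y) {v : List (Fin m)}
    {a b : X} (ha : a ∈ f '' (wordMap φ v '' E)) (hb : b ∈ f '' (wordMap φ v '' E)) :
    dist a b ≤ C * ((v.map ρ).prod * diam E) := by
  obtain ⟨x, hx, rfl⟩ := ha
  obtain ⟨y, hy, rfl⟩ := hb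
  have hEv := (mapsTo_wordMap hE v).image_subset
  exact (hf x (hEv hx) y (hEv hy)).trans
    (mul_le_mul_of_nonneg_left (dist_le_of_mem_wordMap_image hρ hφ hbdd hx hy) hC)

theorem exists_isLongestCoveringWord_image_wordMap_image (hE : IsDustLikeWith ρ φ E)
    (hF : IsDustLikeWith τ ψ F) (hbij : BijOn f E F) (hC : 0 < C)
    (hlip : ∀ x ∈ E, ∀ y ∈ E,
      C⁻¹ * dist x y ≤ dist (f x) (f y) ∧ dist (f x) (f y) ≤ C * dist x y)
    {gE gF : ℝ} (hgE0 : 0 < gE) (hgE : ∀ j, IsSeparatedSubset E gE (φ j '' E))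
    (hgF : ∀ j, IsSeparatedSubset F gF (ψ j '' F)) {p q : X} (hp : p ∈ E) (hq : q ∈ E)
    (hpq : p ≠ q) (v : List (Fin m)) :
    ∃ w, IsLongestCoveringWord ψ F (f '' (wordMap φ v '' E)) w ∧
      gF * (w.map τ).prod ≤ C * ((v.map ρ).prod * diam E) ∧
      C⁻¹ * dist p q * (v.map ρ).prod ≤ (w.map τ).prod * diam F ∧
      IsSeparatedSubset F (C⁻¹ * gE * gF / (C * diam E))
        (F ∩ wordMap ψ w ⁻¹' (f '' (wordMap φ v '' E))) := by
  set D := f '' (wordMap φ v '' E)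
  have hρ j : 0 < ρ j := (hE.ratio_mem j).1
  have hτ j : 0 < τ j := (hF.ratio_mem j).1
  have hP := List.prod_map_pos hρ v
  have hEv := (mapsTo_wordMap hE.eq_iUnion v).image_subset
  have hdiam : 0 < diam E := diam_pos ⟨p, hp, q, hq, hpq⟩ hE.isCompact.isBounded
  have hfar : C⁻¹ * dist p q * (v.map ρ).prod ≤ dist (f (wordMap φ v p)) (f (wordMap φ v q)) := by
    refine le_of_eq_of_le ?_ (hlip _ (hEv ⟨p, hp, rfl⟩) _ (hEv ⟨q, hq, rfl⟩)).1
    rw [isSimilarity_wordMap hE.isSimilarity v]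
    ring
  have hfp : f (wordMap φ v p) ∈ D := mem_image_of_mem f ⟨p, hp, rfl⟩
  have hfq : f (wordMap φ v q) ∈ D := mem_image_of_mem f ⟨q, hq, rfl⟩
  have hfpq : f (wordMap φ v p) ≠ f (wordMap φ v q) :=
    dist_pos.1 (lt_of_lt_of_le (by have := dist_pos.2 hpq; positivity) hfar)
  obtain ⟨w, hw⟩ := exists_isLongestCoveringWord hF.ratio_mem hF.isSimilarity
    hF.isCompact.isBounded ((image_mono hEv).trans hbij.mapsTo.image_subset) hfp hfq hfpq
  have hQ := List.prod_map_pos hτ w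
  have hup := hw.mul_prod_map_le hτ hF.isSimilarity hF.eq_iUnion hgF ⟨_, hfp⟩
    fun a ha b hb => dist_le_of_mem_image_wordMap_image hρ hE.isSimilarity hE.eq_iUnion
      hE.isCompact.isBounded hC.le (fun x hx y hy => (hlip x hx y hy).2) ha hb
  have hsep : IsSeparatedSubset F (C⁻¹ * (gE * (v.map ρ).prod)) D :=
    (isSeparatedSubset_wordMap_image hE.ratio_mem hE.isSimilarity hE.eq_iUnion hgE0.le hgE
      v).image (inv_nonneg.2 hC.le) hbij.mapsTo hbij.surjOn fun x hx y hy => (hlip x hx y hy).1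
  refine ⟨w, hw, hup,
    hfar.trans (dist_le_of_mem_wordMap_image hτ hF.isSimilarity hF.isCompact.isBounded
      (hw.1 hfp) (hw.1 hfq)),
    (hsep.inter_preimage (isSimilarity_wordMap hF.isSimilarity w) hQ
      (mapsTo_wordMap hF.eq_iUnion w)).mono ?_⟩
  rw [div_le_div_iff₀ (by positivity) hQ]
  calc C⁻¹ * gE * gF * (w.map τ).prod = C⁻¹ * gE * (gF * (w.map τ).prod) := by ring
    _ ≤ C⁻¹ * gE * (C * ((v.map ρ).prod * diam E)) := by gcongr
    _ = C⁻¹ * (gE * (v.map ρ).prod) * (C * diam E) := by ring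

theorem exists_uniform_rescaling_image_cylinder (hE : IsDustLikeWith ρ φ E)
    (hF : IsDustLikeWith τ ψ F) (hbij : BijOn f E F) (hC : 0 < C)
    (hlip : ∀ x ∈ E, ∀ y ∈ E,
      C⁻¹ * dist x y ≤ dist (f x) (f y) ∧ dist (f x) (f y) ≤ C * dist x y)
    (hnt : E.Nontrivial) :
    ∃ c₁ > 0, ∃ c₂ > 0, ∀ (i : List (Fin m)) (j : Fin m),
      ∃ (w u : List (Fin n)) (B B' : Set X), c₁ * ρ j ≤ (u.map τ).prod ∧
        IsSeparatedSubset F c₂ B ∧ IsSeparatedSubset F c₂ B' ∧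
        wordMap ψ w '' B = f '' (wordMap φ i '' E) ∧
        wordMap ψ (w ++ u) '' B' = f '' (wordMap φ (i ++ [j]) '' E) := by
  obtain ⟨gE, hgE0, hgE⟩ := hE.exists_isSeparatedSubset
  obtain ⟨gF, hgF0, hgF⟩ := hF.exists_isSeparatedSubset
  obtain ⟨p, hp, q, hq, hpq⟩ := hnt
  have hpq' : 0 < dist p q := dist_pos.2 hpq
  have hdE : 0 < diam E := diam_pos ⟨p, hp, q, hq, hpq⟩ hE.isCompact.isBounded
  have hdF : 0 < diam F := diam_pos ⟨f p, hbij.mapsTo hp, f q, hbij.mapsTo hq,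
    hbij.injOn.ne hp hq hpq⟩ hF.isCompact.isBounded
  have hτ j : 0 < τ j := (hF.ratio_mem j).1
  have key := exists_isLongestCoveringWord_image_wordMap_image hE hF hbij hC hlip hgE0 hgE hgF
    hp hq hpq
  refine ⟨C⁻¹ * dist p q * gF / (C * diam E * diam F), by positivity,
    C⁻¹ * gE * gF / (C * diam E), by positivity, fun i j => ?_⟩
  obtain ⟨w, hw, hwup, -, hsep⟩ := key i
  obtain ⟨w', hw', -, hw'low, hsep'⟩ := key (i ++ [j])
  obtain ⟨u, rfl⟩ := hw.isPrefix hw' hτ hF.isSimilarity hF.eq_iUnion hF.pairwise_disjoint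
    (image_mono (wordMap_append_image_subset hE.eq_iUnion i [j]))
    ⟨_, mem_image_of_mem f (mem_image_of_mem _ hp)⟩
  refine ⟨w, u, _, _, ?_, hsep, hsep', by rw [image_inter_preimage, inter_eq_right.2 hw.1],
    by rw [image_inter_preimage, inter_eq_right.2 hw'.1]⟩
  simp only [List.map_append, List.prod_append, List.map_cons, List.map_nil, List.prod_cons,
    List.prod_nil, mul_one] at hw'low
  have hP := List.prod_map_pos (fun j => (hE.ratio_mem j).1) i
  have hu := List.prod_map_pos hτ u
  rw [div_mul_eq_mul_div, div_le_iff₀ (by positivity)]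
  refine le_of_mul_le_mul_left ?_ hP
  calc (i.map ρ).prod * (C⁻¹ * dist p q * gF * ρ j)
      = gF * (C⁻¹ * dist p q * ((i.map ρ).prod * ρ j)) := by ring
    _ ≤ gF * ((w.map τ).prod * (u.map τ).prod * diam F) := by gcongr
    _ = gF * (w.map τ).prod * ((u.map τ).prod * diam F) := by ring
    _ ≤ C * ((i.map ρ).prod * diam E) * ((u.map τ).prod * diam F) := by gcongr
    _ = (i.map ρ).prod * ((u.map τ).prod * (C * diam E * diam F)) := by ring

end BiLipschitz

theorem ENNReal.mul_mul_div_mul_mul_div_mul_div {a b c d e x y : ℝ≥0∞} (ha₀ : a ≠ 0) (ha : a ≠ ∞)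
    (hc₀ : c ≠ 0) (hc : c ≠ ∞) (hd₀ : d ≠ 0) (hd : d ≠ ∞) (he₀ : e ≠ 0) (he : e ≠ ∞) :
    a * (b * x) / (c * (d * e)) / (a * y / (c * e)) = b * x / (d * y) := by
  have hK₀ : a / (c * e) ≠ 0 := ENNReal.div_ne_zero.2 ⟨ha₀, ENNReal.mul_ne_top hc he⟩
  have hK : a / (c * e) ≠ ∞ := ENNReal.div_ne_top ha (mul_ne_zero hc₀ he₀)
  have hinv : (c * (d * e))⁻¹ = (c * e)⁻¹ * d⁻¹ := by
    rw [ENNReal.mul_inv (.inl hc₀) (.inl hc), ENNReal.mul_inv (.inl hd₀) (.inl hd),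
      ENNReal.mul_inv (.inl hc₀) (.inl hc)]
    ring
  calc a * (b * x) / (c * (d * e)) / (a * y / (c * e))
      = a / (c * e) * (b * x / d) / (a * y / (c * e)) := by
        simp only [div_eq_mul_inv, hinv]
        ring
    _ = b * x / (d * y) := by
        rw [ENNReal.mul_div_right_comm (a := a) (b := y), ENNReal.mul_div_mul_left _ _ hK₀ hK,
          div_eq_mul_inv, div_eq_mul_inv, div_eq_mul_inv, ENNReal.mul_inv (.inl hd₀) (.inl hd),
          mul_assoc]

theorem nontrivial_of_hausdorffMeasure_ne_zero {X : Type*} [EMetricSpace X] [MeasurableSpace X]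
    [BorelSpace X] {s : ℝ} (hs : 0 < s) {A : Set X} (hA : μH[s] A ≠ 0) : A.Nontrivial := by
  have := Measure.nullSingletonClass_hausdorff X hs
  exact not_subsingleton_iff.1 fun h => hA (h.measure_zero _)

section CylinderRatio

variable {X : Type*} [MetricSpace X] [MeasurableSpace X] [BorelSpace X] {m n : ℕ}
  {ρ : Fin m → ℝ} {τ : Fin n → ℝ} {φ : Fin m → X → X} {ψ : Fin n → X → X} {E : Set X}
  {f : X → X} {s : ℝ}

/-- The value of `g_{|w|}` on the cylinder `E_w`. -/
def cylinderRatio (s : ℝ) (f : X → X) (φ : Fin m → X → X) (E : Set X) (w : List (Fin m)) :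
    ℝ≥0∞ :=
  μH[s] (f '' (wordMap φ w '' E)) / μH[s] (wordMap φ w '' E)

theorem cylinderRatio_eq_zero (hρ : ∀ j, 0 < ρ j) (hφ : ∀ j, IsSimilarity (ρ j) (φ j))
    (hE : E = ⋃ j, φ j '' E) {K : ℝ≥0} (hf : LipschitzOnWith K f E) (hs : 0 ≤ s)
    (hdeg : μH[s] E = 0 ∨ μH[s] E = ∞) (w : List (Fin m)) : cylinderRatio s f φ E w = 0 := by
  have hEw := (mapsTo_wordMap hE w).image_subset
  rcases hdeg with h0 | htop
  · have hw0 : μH[s] (wordMap φ w '' E) = 0 := measure_mono_null hEw h0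
    have hfw0 : μH[s] (f '' (wordMap φ w '' E)) = 0 := by
      simpa [hw0] using (hf.mono hEw).hausdorffMeasure_image_le hs
    rw [cylinderRatio, hfw0, ENNReal.zero_div]
  · rw [cylinderRatio, hausdorffMeasure_wordMap_image hρ hφ hs, htop,
      ENNReal.mul_top (ENNReal.rpow_pos (ENNReal.ofReal_pos.2 (List.prod_map_pos hρ w))
        ENNReal.ofReal_ne_top).ne', ENNReal.div_top]

theorem cylinderRatio_append_div_cylinderRatio (hρ : ∀ j, 0 < ρ j)
    (hφ : ∀ j, IsSimilarity (ρ j) (φ j)) (hτ : ∀ j, 0 < τ j) (hψ : ∀ j, IsSimilarity (τ j) (ψ j))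
    (hs : 0 ≤ s) (hE₀ : μH[s] E ≠ 0) (hE : μH[s] E ≠ ∞) {i : List (Fin m)} {j : Fin m}
    {w u : List (Fin n)} {B B' : Set X} (hB : wordMap ψ w '' B = f '' (wordMap φ i '' E))
    (hB' : wordMap ψ (w ++ u) '' B' = f '' (wordMap φ (i ++ [j]) '' E)) :
    cylinderRatio s f φ E (i ++ [j]) / cylinderRatio s f φ E i =
      ENNReal.ofReal (u.map τ).prod ^ s * μH[s] B' / (ENNReal.ofReal (ρ j) ^ s * μH[s] B) := by
  have hpos {x : ℝ} (hx : 0 < x) : ENNReal.ofReal x ^ s ≠ 0 :=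
    (ENNReal.rpow_pos (ENNReal.ofReal_pos.2 hx) ENNReal.ofReal_ne_top).ne'
  have hfin {x : ℝ} : ENNReal.ofReal x ^ s ≠ ∞ :=
    ENNReal.rpow_ne_top_of_nonneg hs ENNReal.ofReal_ne_top
  rw [cylinderRatio, cylinderRatio, ← hB, ← hB', wordMap_append, image_comp, wordMap_append,
    image_comp]
  simp only [hausdorffMeasure_wordMap_image hρ hφ hs, hausdorffMeasure_wordMap_image hτ hψ hs,
    List.map_cons, List.map_nil, List.prod_cons, List.prod_nil, mul_one]
  exact ENNReal.mul_mul_div_mul_mul_div_mul_div (hpos (List.prod_map_pos hτ w)) hfin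
    (hpos (List.prod_map_pos hρ i)) hfin (hpos (hρ j)) hfin hE₀ hE

end CylinderRatio

theorem ratio_set_of_martingale_finite_general
    (d m n : ℕ)
    (ρ : Fin m → ℝ) (τ : Fin n → ℝ)
    (hρ : IsContractionVector d m ρ) (hτ : IsContractionVector d n τ)
    (E F : Set (EuclideanSpace ℝ (Fin d)))
    (hEcomp : IsCompact E)
    (φ : Fin m → EuclideanSpace ℝ (Fin d) → EuclideanSpace ℝ (Fin d))
    (hφ : ∀ j, IsSimilarity (ρ j) (φ j))
    (hEdef : E = ⋃ j, φ j '' E)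
    (hEdisj : Pairwise fun j k => Disjoint (φ j '' E) (φ k '' E))
    (hFcomp : IsCompact F)
    (ψ : Fin n → EuclideanSpace ℝ (Fin d) → EuclideanSpace ℝ (Fin d))
    (hψ : ∀ j, IsSimilarity (τ j) (ψ j))
    (hFdef : F = ⋃ j, ψ j '' F)
    (hFdisj : Pairwise fun j k => Disjoint (ψ j '' F) (ψ k '' F))
    (f : EuclideanSpace ℝ (Fin d) → EuclideanSpace ℝ (Fin d)) (C : ℝ) (hC : 0 < C)
    (hbij : Set.BijOn f E F)
    (hlip : ∀ x ∈ E, ∀ y ∈ E,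
      C⁻¹ * dist x y ≤ dist (f x) (f y) ∧ dist (f x) (f y) ≤ C * dist x y)
    (s : ℝ) (hs : 0 < s) :
    -- the x ∈ E_i with |i| = k ≥ 1 realize g_k(x) = H^s(f(E_i))/H^s(E_i), so
    -- the set {g_{k+1}(x)/g_k(x) : x ∈ E, k ≥ 1} is the set below
    Set.Finite {x : ENNReal | ∃ (i : List (Fin m)) (j : Fin m), i ≠ [] ∧
      x = (μH[s] (f '' (wordMap φ (i ++ [j]) '' E)) / μH[s] (wordMap φ (i ++ [j]) '' E)) /
          (μH[s] (f '' (wordMap φ i '' E)) / μH[s] (wordMap φ i '' E))} := by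
  have hE : IsDustLikeWith ρ φ E := ⟨hρ.1, hφ, hEcomp, hEdef, hEdisj⟩
  have hF : IsDustLikeWith τ ψ F := ⟨hτ.1, hψ, hFcomp, hFdef, hFdisj⟩
  have hρpos j : 0 < ρ j := (hρ.1 j).1
  by_cases hdeg : μH[s] E = 0 ∨ μH[s] E = ∞
  · have hfE : LipschitzOnWith C.toNNReal f E := .of_dist_le_mul fun x hx y hy => by
      rw [Real.coe_toNNReal _ hC.le]
      exact (hlip x hx y hy).2
    refine (finite_singleton 0).subset ?_
    rintro - ⟨i, j, -, rfl⟩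
    change cylinderRatio s f φ E (i ++ [j]) / cylinderRatio s f φ E i = 0
    rw [cylinderRatio_eq_zero hρpos hφ hEdef hfE hs.le hdeg, ENNReal.zero_div]
  obtain ⟨hE₀, hEtop⟩ := not_or.1 hdeg
  obtain ⟨c₁, hc₁, c₂, hc₂, hrescale⟩ := exists_uniform_rescaling_image_cylinder hE hF hbij hC
    hlip (nontrivial_of_hausdorffMeasure_ne_zero hs hE₀)
  have hwords j := finite_setOf_le_prod_map hF.ratio_mem (mul_pos hc₁ (hρpos j))
  have hsep := finite_setOf_isSeparatedSubset hF.ratio_mem hψ hFdef hFcomp.isBounded hc₂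
  refine (finite_iUnion fun j => ((hwords j).prod (hsep.prod hsep)).image fun ⟨u, B, B'⟩ =>
    ENNReal.ofReal (u.map τ).prod ^ s * μH[s] B' / (ENNReal.ofReal (ρ j) ^ s * μH[s] B)).subset ?_
  rintro - ⟨i, j, -, rfl⟩
  obtain ⟨w, u, B, B', hu, hB, hB', hwB, hwuB'⟩ := hrescale i j
  exact mem_iUnion.2 ⟨j, (u, B, B'), ⟨hu, hB, hB'⟩, (cylinderRatio_append_div_cylinderRatio hρpos
    hφ (fun j => (hF.ratio_mem j).1) hψ hs.le hE₀ hEtop hwB hwuB').symm⟩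

theorem ratio_set_of_martingale_finite
    (d m n : ℕ) (hd : 1 ≤ d)
    (ρ : Fin m → ℝ) (τ : Fin n → ℝ)
    (hρ : IsContractionVector d m ρ) (hτ : IsContractionVector d n τ)
    (E F : Set (EuclideanSpace ℝ (Fin d)))
    (hEne : E.Nonempty) (hEcomp : IsCompact E)
    (φ : Fin m → EuclideanSpace ℝ (Fin d) → EuclideanSpace ℝ (Fin d))
    (hφ : ∀ j, IsSimilarity (ρ j) (φ j))
    (hEdef : E = ⋃ j, φ j '' E)
    (hEdisj : Pairwise fun j k => Disjoint (φ j '' E) (φ k '' E))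
    (hFne : F.Nonempty) (hFcomp : IsCompact F)
    (ψ : Fin n → EuclideanSpace ℝ (Fin d) → EuclideanSpace ℝ (Fin d))
    (hψ : ∀ j, IsSimilarity (τ j) (ψ j))
    (hFdef : F = ⋃ j, ψ j '' F)
    (hFdisj : Pairwise fun j k => Disjoint (ψ j '' F) (ψ k '' F))
    (f : EuclideanSpace ℝ (Fin d) → EuclideanSpace ℝ (Fin d)) (C : ℝ) (hC : 0 < C)
    (hbij : Set.BijOn f E F)
    (hlip : ∀ x ∈ E, ∀ y ∈ E,
      C⁻¹ * dist x y ≤ dist (f x) (f y) ∧ dist (f x) (f y) ≤ C * dist x y)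
    (s : ℝ) (hs : 0 < s)
    (hρs : ∑ j, ρ j ^ s = 1) (hτs : ∑ j, τ j ^ s = 1) :
    -- the x ∈ E_i with |i| = k ≥ 1 realize g_k(x) = H^s(f(E_i))/H^s(E_i), so
    -- the set {g_{k+1}(x)/g_k(x) : x ∈ E, k ≥ 1} is the set below
    Set.Finite {x : ENNReal | ∃ (i : List (Fin m)) (j : Fin m), i ≠ [] ∧
      x = (μH[s] (f '' (wordMap φ (i ++ [j]) '' E)) / μH[s] (wordMap φ (i ++ [j]) '' E)) /
          (μH[s] (f '' (wordMap φ i '' E)) / μH[s] (wordMap φ i '' E))} :=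
  ratio_set_of_martingale_finite_general d m n ρ τ hρ hτ E F hEcomp φ hφ hEdef hEdisj hFcomp ψ hψ
    hFdef hFdisj f C hC hbij hlip s hs
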